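/- LPostS = PostS: a language L ⊆ Σ* is recognized with some error bound ε < 1/2 by a Latvian RT-PostPFA if and only if it is recognized with some error bound ε < 1/2 by an RT-PostPFA. -/

import Mathlib

noncomputable section

/-- The input alphabet extended with the two endmarkers `¢` and `$`. -/
inductive ESym (α : Type) : Type where
  | cent : ESym α
  | dollar : ESym α
  | letter : α → ESym α

/-- The state distribution obtained by applying, in order, the matrices for
`¢`, the letters of `w`, and `$` to the standard basis vector at the initial state `0`. -/
def pRun {α : Type} {n : ℕ} (A : ESym α → Matrix (Fin (n + 1)) (Fin (n + 1)) ℝ)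
    (w : List α) : Fin (n + 1) → ℝ :=
  (ESym.cent :: (w.map ESym.letter ++ [ESym.dollar])).foldl
    (fun v σ => (A σ).mulVec v) (Pi.single 0 1)

/-- A real-time probabilistic finite automaton with postselection (RT-PostPFA). -/
structure PostPFA (α : Type) where
  n : ℕ
  A : ESym α → Matrix (Fin (n + 1)) (Fin (n + 1)) ℝ
  nonneg : ∀ σ i j, 0 ≤ A σ i j
  colSum : ∀ σ j, ∑ i, A σ i j = 1
  Qpa : Finset (Fin (n + 1))
  Qpr : Finset (Fin (n + 1))
  disj : Disjoint Qpa Qpr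
  postPos : ∀ w : List α,
    0 < (∑ i ∈ Qpa, pRun A w i) + (∑ i ∈ Qpr, pRun A w i)

/-- Acceptance probability before postselection. -/
def PostPFA.pacc {α : Type} (M : PostPFA α) (w : List α) : ℝ :=
  ∑ i ∈ M.Qpa, pRun M.A w i

/-- Rejection probability before postselection. -/
def PostPFA.prej {α : Type} (M : PostPFA α) (w : List α) : ℝ :=
  ∑ i ∈ M.Qpr, pRun M.A w i

/-- Normalized acceptance probability of an RT-PostPFA. -/
def PostPFA.fa {α : Type} (M : PostPFA α) (w : List α) : ℝ :=
  M.pacc w / (M.pacc w + M.prej w)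

/-- Recognition of a language with error bound `ε`. -/
def PostPFA.Recognizes {α : Type} (M : PostPFA α) (L : Set (List α)) (ε : ℝ) : Prop :=
  ∀ w : List α, (w ∈ L → 1 - ε ≤ M.fa w) ∧ (w ∉ L → M.fa w ≤ ε)

/-- The class of languages recognized by RT-PostPFAs with bounded error. -/
def PostS {α : Type} (L : Set (List α)) : Prop :=
  ∃ (M : PostPFA α) (ε : ℝ), 0 ≤ ε ∧ ε < 1 / 2 ∧ M.Recognizes L ε

/-- Recognition with zero error: `fa = 1` on members, `fa = 0` on non-members. -/
def PostPFA.RecognizesZero {α : Type} (M : PostPFA α) (L : Set (List α)) : Prop :=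
  ∀ w : List α, (w ∈ L → M.fa w = 1) ∧ (w ∉ L → M.fa w = 0)

/-- The class of languages recognized by RT-PostPFAs with zero error. -/
def ZPostS {α : Type} (L : Set (List α)) : Prop :=
  ∃ M : PostPFA α, M.RecognizesZero L

/-- The flag of a Latvian postselection automaton: accept (`A`) or reject (`R`)
with certainty when the postselection probability is zero. -/
inductive PostFlag : Type where
  | A : PostFlag
  | R : PostFlag
deriving DecidableEq

/-- A Latvian RT-PostPFA: an RT-PostPFA without the positivity requirement,
together with a flag `τ ∈ {A, R}`. -/
structure LPostPFA (α : Type) where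
  n : ℕ
  A : ESym α → Matrix (Fin (n + 1)) (Fin (n + 1)) ℝ
  nonneg : ∀ σ i j, 0 ≤ A σ i j
  colSum : ∀ σ j, ∑ i, A σ i j = 1
  Qpa : Finset (Fin (n + 1))
  Qpr : Finset (Fin (n + 1))
  disj : Disjoint Qpa Qpr
  tau : PostFlag

/-- Acceptance probability before postselection. -/
def LPostPFA.pacc {α : Type} (M : LPostPFA α) (w : List α) : ℝ :=
  ∑ i ∈ M.Qpa, pRun M.A w i

/-- Rejection probability before postselection. -/
def LPostPFA.prej {α : Type} (M : LPostPFA α) (w : List α) : ℝ :=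
  ∑ i ∈ M.Qpr, pRun M.A w i

/-- Acceptance probability of a Latvian RT-PostPFA. -/
def LPostPFA.fa {α : Type} (M : LPostPFA α) (w : List α) : ℝ :=
  if 0 < M.pacc w + M.prej w then M.pacc w / (M.pacc w + M.prej w)
  else if M.tau = PostFlag.A then 1 else 0

/-- Recognition of a language with error bound `ε`. -/
def LPostPFA.Recognizes {α : Type} (M : LPostPFA α) (L : Set (List α)) (ε : ℝ) : Prop :=
  ∀ w : List α, (w ∈ L → 1 - ε ≤ M.fa w) ∧ (w ∉ L → M.fa w ≤ ε)

/-- The class of languages recognized by Latvian RT-PostPFAs with bounded error. -/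
def LPostS {α : Type} (L : Set (List α)) : Prop :=
  ∃ (M : LPostPFA α) (ε : ℝ), 0 ≤ ε ∧ ε < 1 / 2 ∧ M.Recognizes L ε


/-! A Latvian machine differs from an ordinary one only on words whose postselection probability
`p^a + p^r` vanishes. As the alphabet is finite, every positive entry of the state vector of `w`,
and hence `p^a + p^r` when positive, is at least `m ^ (|w| + 2)`, where `m` is the smallest positive
matrix entry. Add a state that receives probability `δ` on `¢` and retains only a `δ`-fraction of
it on every later symbol, and postselect it on the side of the flag `τ`. For `δ = m η` with `η`
small, its weight `δ ^ (|w| + 2)` is negligible against a positive `p^a + p^r` and decides the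
outcome when `p^a + p^r = 0`, so the acceptance probability moves by an arbitrarily small amount. -/

open Matrix

section Granularity

variable {β ι κ : Type*}

def ZeroOrGe (c : ℝ) (f : β → ℝ) : Prop :=
  ∀ x, f x = 0 ∨ c ≤ f x

namespace ZeroOrGe

variable {a b c : ℝ} {f g : β → ℝ}

lemma nonneg (hf : ZeroOrGe c f) (hc : 0 ≤ c) (x : β) : 0 ≤ f x :=
  (hf x).elim (fun h => h.ge) hc.trans

lemma mul (hf : ZeroOrGe a f) (hg : ZeroOrGe b g) (ha : 0 ≤ a) (hb : 0 ≤ b) :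
    ZeroOrGe (a * b) (f * g) := fun x => by
  rcases hf x with hfx | hfx
  · simp [hfx]
  rcases hg x with hgx | hgx
  · simp [hgx]
  exact Or.inr (mul_le_mul hfx hgx hb (ha.trans hfx))

lemma sum (hf : ZeroOrGe c f) (hc : 0 ≤ c) :
    ZeroOrGe c fun s : Finset β => ∑ x ∈ s, f x := fun s => by
  by_cases h : ∃ x ∈ s, f x ≠ 0
  · obtain ⟨x, hx, hfx⟩ := h
    exact Or.inr ((hf x).resolve_left hfx |>.trans
      (Finset.single_le_sum (fun y _ => hf.nonneg hc y) hx))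
  · push Not at h
    exact Or.inl (Finset.sum_eq_zero h)

lemma mulVec [Fintype ι] {m : ℝ} {B : Matrix κ ι ℝ} {v : ι → ℝ}
    (hB : ∀ i, ZeroOrGe m (B i)) (hv : ZeroOrGe c v) (hm : 0 ≤ m) (hc : 0 ≤ c) :
    ZeroOrGe (m * c) (B *ᵥ v) := fun i =>
  ((hB i).mul hv hm hc).sum (mul_nonneg hm hc) Finset.univ

lemma foldl_mulVec [Fintype ι] {S : Type*} {m : ℝ} {A : S → Matrix ι ι ℝ}
    (hA : ∀ s i, ZeroOrGe m (A s i)) (hm : 0 ≤ m) (l : List S) {v : ι → ℝ}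
    (hv : ZeroOrGe c v) (hc : 0 ≤ c) :
    ZeroOrGe (m ^ l.length * c) (l.foldl (fun u s => A s *ᵥ u) v) := by
  induction l generalizing c v with
  | nil => simpa using hv
  | cons s l ih =>
    have := ih (hv.mulVec (hA s) hm hc) (mul_nonneg hm hc)
    rwa [← mul_assoc, ← pow_succ] at this

end ZeroOrGe

lemma exists_zeroOrGe_of_nonneg [Finite β] {f : β → ℝ} (hf : ∀ x, 0 ≤ f x) :
    ∃ m, 0 < m ∧ m ≤ 1 ∧ ZeroOrGe m f := by
  have := Fintype.ofFinite β
  classical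
  let s : Finset ℝ := insert 1 ((Finset.univ.filter fun x => 0 < f x).image f)
  have hs : s.Nonempty := Finset.insert_nonempty _ _
  refine ⟨s.min' hs, ?_, s.min'_le 1 (Finset.mem_insert_self _ _), fun x => ?_⟩
  · rw [Finset.lt_min'_iff]
    intro y hy
    rcases Finset.mem_insert.mp hy with rfl | hy
    · exact one_pos
    · obtain ⟨x, hx, rfl⟩ := Finset.mem_image.mp hy
      exact (Finset.mem_filter.mp hx).2
  · rcases (hf x).eq_or_lt with h | h
    · exact Or.inl h.symm
    · exact Or.inr (s.min'_le _ (Finset.mem_insert_of_mem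
        (Finset.mem_image_of_mem f (Finset.mem_filter.mpr ⟨Finset.mem_univ x, h⟩))))

end Granularity

instance ESym.finite {α : Type} [Finite α] : Finite (ESym α) :=
  Finite.of_surjective (fun x : Option (Option α) => x.elim .cent (·.elim .dollar .letter))
    (by rintro (_ | _ | a)
        exacts [⟨none, rfl⟩, ⟨some none, rfl⟩, ⟨some (some a), rfl⟩])

section Run

variable {α : Type} {ι κ : Type*} [Fintype ι]

def runFrom (A : ESym α → Matrix ι ι ℝ) (v : ι → ℝ) (w : List α) : ι → ℝ :=
  (ESym.cent :: (w.map ESym.letter ++ [ESym.dollar])).foldl (fun u σ => A σ *ᵥ u) v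

lemma pRun_eq_runFrom {n : ℕ} (A : ESym α → Matrix (Fin (n + 1)) (Fin (n + 1)) ℝ)
    (w : List α) : pRun A w = runFrom A (Pi.single 0 1) w := rfl

lemma runFrom_reindex [Fintype κ] (A : ESym α → Matrix ι ι ℝ) (e : ι ≃ κ) (v : ι → ℝ)
    (w : List α) :
    runFrom (fun σ => reindex e e (A σ)) (v ∘ e.symm) w = runFrom A v w ∘ e.symm := by
  refine List.foldl_hom (· ∘ e.symm) fun u σ => ?_
  simp only [reindex_apply, submatrix_mulVec_equiv, Equiv.symm_symm, Function.comp_assoc,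
    Equiv.symm_comp_self, Function.comp_id]

lemma zeroOrGe_pRun {n : ℕ} {A : ESym α → Matrix (Fin (n + 1)) (Fin (n + 1)) ℝ} {m : ℝ}
    (hA : ∀ σ i, ZeroOrGe m (A σ i)) (hm : 0 ≤ m) (w : List α) :
    ZeroOrGe (m ^ (w.length + 2)) (pRun A w) := by
  have hv : ZeroOrGe 1 (Pi.single (0 : Fin (n + 1)) (1 : ℝ)) := fun i => by
    rw [Pi.single_apply]
    split_ifs <;> simp
  have hlen : (ESym.cent :: (w.map ESym.letter ++ [ESym.dollar])).length = w.length + 2 := by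
    simp
  have := ZeroOrGe.foldl_mulVec hA hm (ESym.cent :: (w.map ESym.letter ++ [ESym.dollar])) hv
    zero_le_one
  rwa [mul_one, hlen] at this

lemma pRun_nonneg {n : ℕ} {A : ESym α → Matrix (Fin (n + 1)) (Fin (n + 1)) ℝ}
    (hA : ∀ σ i j, 0 ≤ A σ i j) (w : List α) (i : Fin (n + 1)) : 0 ≤ pRun A w i :=
  (zeroOrGe_pRun (fun σ i j => Or.inr (hA σ i j)) le_rfl w).nonneg (by positivity) i

end Run

section Padding

variable {α : Type} {ι : Type*} {A : ESym α → Matrix ι ι ℝ} {δ : ℝ}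

/- State `Sum.inr 0` receives weight `δ` from every state on `¢` and keeps a `δ`-fraction of its
weight on every later symbol; state `Sum.inr 1` is absorbing. -/
variable (A δ) in
def padMatrix : ESym α → Matrix (ι ⊕ Fin 2) (ι ⊕ Fin 2) ℝ
  | .cent => fromBlocks ((1 - δ) • A .cent) 0 (of fun r _ => ![δ, 0] r) !![δ, 0; 1 - δ, 1]
  | σ => fromBlocks (A σ) 0 0 !![δ, 0; 1 - δ, 1]

lemma padMatrix_of_ne_cent {σ : ESym α} (hσ : σ ≠ .cent) :
    padMatrix A δ σ = fromBlocks (A σ) 0 0 !![δ, 0; 1 - δ, 1] := by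
  cases σ
  · exact absurd rfl hσ
  all_goals rfl

lemma padMatrix_nonneg (hA : ∀ σ i j, 0 ≤ A σ i j) (hδ0 : 0 ≤ δ) (hδ1 : δ ≤ 1) (σ : ESym α)
    (i j : ι ⊕ Fin 2) : 0 ≤ padMatrix A δ σ i j := by
  have hδ : 0 ≤ 1 - δ := by linarith
  cases σ <;> rcases i with i | r <;> rcases j with j | s <;> (try fin_cases r) <;>
    (try fin_cases s) <;> simp [padMatrix, hA, hδ0, hδ, mul_nonneg]

lemma padMatrix_colSum [Fintype ι] (hA : ∀ σ j, ∑ i, A σ i j = 1) (σ : ESym α)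
    (j : ι ⊕ Fin 2) : ∑ i, padMatrix A δ σ i j = 1 := by
  cases σ <;> rcases j with j | s <;> (try fin_cases s) <;>
    simp [padMatrix, Fintype.sum_sum_type, hA, ← Finset.mul_sum]

variable [Fintype ι]

lemma foldl_padMatrix {l : List (ESym α)} (hl : ESym.cent ∉ l) (u : ι ⊕ Fin 2 → ℝ) :
    l.foldl (fun v σ => padMatrix A δ σ *ᵥ v) u ∘ Sum.inl =
        l.foldl (fun v σ => A σ *ᵥ v) (u ∘ Sum.inl) ∧
      l.foldl (fun v σ => padMatrix A δ σ *ᵥ v) u (Sum.inr 0) =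
        δ ^ l.length * u (Sum.inr 0) := by
  induction l generalizing u with
  | nil => simp
  | cons σ l ih =>
    obtain ⟨hσ, hl⟩ : σ ≠ .cent ∧ ESym.cent ∉ l := by simpa [eq_comm] using hl
    obtain ⟨ih₁, ih₂⟩ := ih hl (padMatrix A δ σ *ᵥ u)
    refine ⟨?_, ?_⟩
    · rw [List.foldl_cons, ih₁, padMatrix_of_ne_cent hσ, fromBlocks_mulVec]
      simp
    · rw [List.foldl_cons, ih₂, padMatrix_of_ne_cent hσ, fromBlocks_mulVec]
      simp [pow_succ, mul_assoc, vecHead]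

variable [DecidableEq ι]

lemma padMatrix_cent_mulVec_single (i₀ : ι) :
    padMatrix A δ .cent *ᵥ Pi.single (Sum.inl i₀) 1 =
      Sum.elim ((1 - δ) • (A .cent *ᵥ Pi.single i₀ 1)) ![δ, 0] := by
  have hsingle :
      (Pi.single (Sum.inl i₀) 1 : ι ⊕ Fin 2 → ℝ) = Sum.elim (Pi.single i₀ 1) 0 := by
    ext (i | r) <;> simp [Pi.single_apply]
  rw [padMatrix, fromBlocks_mulVec, hsingle, Sum.elim_comp_inl, Sum.elim_comp_inr]
  ext (i | r)
  · simp
  · fin_cases r <;> simp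

lemma runFrom_padMatrix (i₀ : ι) (w : List α) :
    runFrom (padMatrix A δ) (Pi.single (Sum.inl i₀) 1) w ∘ Sum.inl =
        (1 - δ) • runFrom A (Pi.single i₀ 1) w ∧
      runFrom (padMatrix A δ) (Pi.single (Sum.inl i₀) 1) w (Sum.inr 0) =
        δ ^ (w.length + 2) := by
  have hl : ESym.cent ∉ w.map ESym.letter ++ [ESym.dollar] := by simp
  obtain ⟨h₁, h₂⟩ := foldl_padMatrix (A := A) (δ := δ) hl
    (padMatrix A δ .cent *ᵥ Pi.single (Sum.inl i₀) 1)
  refine ⟨?_, ?_⟩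
  · rw [runFrom, List.foldl_cons, h₁, padMatrix_cent_mulVec_single, Sum.elim_comp_inl, runFrom,
      List.foldl_cons]
    exact List.foldl_hom ((1 - δ) • ·) fun v σ => mulVec_smul _ _ _
  · rw [runFrom, List.foldl_cons, h₂, padMatrix_cent_mulVec_single]
    simp [pow_succ]

end Padding

def finSumFinTwoEquiv (n : ℕ) : Fin (n + 1) ⊕ Fin 2 ≃ Fin (n + 2 + 1) :=
  finSumFinEquiv.trans (finCongr (by omega))

lemma finSumFinTwoEquiv_inl_zero (n : ℕ) : finSumFinTwoEquiv n (Sum.inl 0) = 0 := rfl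

section PadPFA

variable {α : Type} {n : ℕ} {A : ESym α → Matrix (Fin (n + 1)) (Fin (n + 1)) ℝ} {δ : ℝ}

variable (A δ) in
def finPadMatrix (σ : ESym α) : Matrix (Fin (n + 2 + 1)) (Fin (n + 2 + 1)) ℝ :=
  reindex (finSumFinTwoEquiv n) (finSumFinTwoEquiv n) (padMatrix A δ σ)

lemma pRun_finPadMatrix (w : List α) :
    pRun (finPadMatrix A δ) w =
      runFrom (padMatrix A δ) (Pi.single (Sum.inl 0) 1) w ∘ (finSumFinTwoEquiv n).symm := by
  have hsingle : (Pi.single 0 1 : Fin (n + 2 + 1) → ℝ) =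
      Pi.single (Sum.inl 0) 1 ∘ (finSumFinTwoEquiv n).symm := by
    rw [Pi.single_comp_equiv, Equiv.symm_symm, finSumFinTwoEquiv_inl_zero]
  rw [pRun_eq_runFrom, hsingle]
  exact runFrom_reindex _ _ _ w

lemma sum_pRun_finPadMatrix (Q : Finset (Fin (n + 1))) (c : Prop) [Decidable c] (w : List α) :
    ∑ i ∈ (Q.disjSum (if c then {0} else ∅)).map (finSumFinTwoEquiv n).toEmbedding,
        pRun (finPadMatrix A δ) w i =
      (1 - δ) * ∑ i ∈ Q, pRun A w i + if c then δ ^ (w.length + 2) else 0 := by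
  obtain ⟨hinl, hinr⟩ := runFrom_padMatrix (A := A) (δ := δ) 0 w
  rw [pRun_finPadMatrix, Finset.sum_map, Finset.sum_disjSum, Finset.mul_sum,
    pRun_eq_runFrom]
  simp only [Equiv.coe_toEmbedding, Function.comp_apply, Equiv.symm_apply_apply]
  congr 1
  · exact Finset.sum_congr rfl fun i _ => congrFun hinl i
  · split_ifs <;> simp [hinr]

end PadPFA

lemma abs_add_div_sub_div_le {x y s r : ℝ} (hx : 0 ≤ x) (hy : 0 ≤ y) (hs : 0 ≤ s) (hr : 0 ≤ r)
    (hxy : 0 < x + y) :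
    |(x + s) / (x + s + (y + r)) - x / (x + y)| ≤ (s + r) / (x + y) := by
  have hden : 0 < x + s + (y + r) := by linarith
  have hnum : |(x + s) * (x + y) - (x + s + (y + r)) * x| ≤ (s + r) * (x + s + (y + r)) := by
    rw [abs_le]
    constructor <;> nlinarith [mul_nonneg hs hy, mul_nonneg hr hx, mul_nonneg hs hx,
      mul_nonneg hr hy, mul_nonneg (add_nonneg hs hr) (add_nonneg hs hr)]
  rw [div_sub_div _ _ hden.ne' hxy.ne', abs_div, abs_of_pos (mul_pos hden hxy),
    div_le_div_iff₀ (mul_pos hden hxy) hxy]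
  nlinarith [mul_le_mul_of_nonneg_right hnum hxy.le]

lemma exists_pow_le_mul {m γ : ℝ} (hm0 : 0 < m) (hm1 : m ≤ 1) (hγ : 0 < γ) :
    ∃ δ, 0 < δ ∧ δ ≤ 1 / 2 ∧ ∀ k ≠ 0, ∀ S, m ^ k ≤ S → δ ^ k ≤ γ * ((1 - δ) * S) := by
  set η := min (1 / 2) (γ / 2)
  have hη0 : 0 < η := lt_min (by norm_num) (by linarith)
  have hη : η ≤ 1 / 2 := min_le_left _ _
  have hδ : m * η ≤ 1 / 2 := by nlinarith
  refine ⟨m * η, mul_pos hm0 hη0, hδ, fun k hk S hS => ?_⟩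
  have hηγ : η ≤ γ * (1 - m * η) := by nlinarith [min_le_right (1 / 2) (γ / 2)]
  calc (m * η) ^ k = η ^ k * m ^ k := by rw [mul_pow, mul_comm]
    _ ≤ η * S := mul_le_mul (pow_le_of_le_one hη0.le (by linarith) hk) hS
        (by positivity) hη0.le
    _ ≤ γ * (1 - m * η) * S := mul_le_mul_of_nonneg_right hηγ ((pow_nonneg hm0.le k).trans hS)
    _ = γ * ((1 - m * η) * S) := mul_assoc _ _ _

lemma PostFlag.ite_add_ite (τ : PostFlag) (t : ℝ) :
    ((if τ = .A then t else 0) + if τ = .R then t else 0) = t := by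
  cases τ <;> simp

namespace LPostPFA

variable {α : Type} (M : LPostPFA α)

lemma pacc_nonneg (w : List α) : 0 ≤ M.pacc w :=
  Finset.sum_nonneg fun i _ => pRun_nonneg M.nonneg w i

lemma prej_nonneg (w : List α) : 0 ≤ M.prej w :=
  Finset.sum_nonneg fun i _ => pRun_nonneg M.nonneg w i

lemma exists_pow_le_pacc_add_prej [Finite α] :
    ∃ m, 0 < m ∧ m ≤ 1 ∧
      ∀ w, 0 < M.pacc w + M.prej w → m ^ (w.length + 2) ≤ M.pacc w + M.prej w := by
  obtain ⟨m, hm0, hm1, hm⟩ :=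
    exists_zeroOrGe_of_nonneg (f := fun p : ESym α × _ × _ => M.A p.1 p.2.1 p.2.2)
      fun p => M.nonneg _ _ _
  refine ⟨m, hm0, hm1, fun w hS => ?_⟩
  have hgap := zeroOrGe_pRun (fun σ i j => hm (σ, i, j)) hm0.le w
  rw [pacc, prej, ← Finset.sum_union M.disj] at hS ⊢
  exact ((hgap.sum (by positivity)) _).resolve_left hS.ne'

def pad (δ : ℝ) (hδ0 : 0 < δ) (hδ1 : δ ≤ 1) : PostPFA α where
  n := M.n + 2
  A := finPadMatrix M.A δ
  nonneg σ i j := padMatrix_nonneg M.nonneg hδ0.le hδ1 σ _ _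
  colSum σ j :=
    ((finSumFinTwoEquiv M.n).symm.sum_comp _).trans (padMatrix_colSum M.colSum σ _)
  Qpa := (M.Qpa.disjSum (if M.tau = .A then {0} else ∅)).map
    (finSumFinTwoEquiv M.n).toEmbedding
  Qpr := (M.Qpr.disjSum (if M.tau = .R then {0} else ∅)).map
    (finSumFinTwoEquiv M.n).toEmbedding
  disj := by
    rw [Finset.disjoint_map, Finset.disjoint_left]
    rintro (i | r) ha hr
    · exact Finset.disjoint_left.mp M.disj (Finset.inl_mem_disjSum.mp ha)
        (Finset.inl_mem_disjSum.mp hr)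
    · rw [Finset.inr_mem_disjSum] at ha hr
      cases h : M.tau <;> simp [h] at ha hr
  postPos w := by
    rw [sum_pRun_finPadMatrix, sum_pRun_finPadMatrix]
    change 0 < (1 - δ) * M.pacc w + _ + ((1 - δ) * M.prej w + _)
    nlinarith [M.tau.ite_add_ite (δ ^ (w.length + 2)), M.pacc_nonneg w, M.prej_nonneg w,
      pow_pos hδ0 (w.length + 2)]

variable {M} {δ : ℝ} {hδ0 : 0 < δ} {hδ1 : δ ≤ 1}

lemma pad_pacc (w : List α) : (M.pad δ hδ0 hδ1).pacc w =
    (1 - δ) * M.pacc w + if M.tau = .A then δ ^ (w.length + 2) else 0 :=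
  sum_pRun_finPadMatrix _ _ w

lemma pad_prej (w : List α) : (M.pad δ hδ0 hδ1).prej w =
    (1 - δ) * M.prej w + if M.tau = .R then δ ^ (w.length + 2) else 0 :=
  sum_pRun_finPadMatrix _ _ w

lemma abs_fa_pad_sub_fa_le {γ : ℝ} (hγ : 0 ≤ γ) (hδ : δ < 1) {w : List α}
    (hsmall : 0 < M.pacc w + M.prej w →
      δ ^ (w.length + 2) ≤ γ * ((1 - δ) * (M.pacc w + M.prej w))) :
    |(M.pad δ hδ0 hδ1).fa w - M.fa w| ≤ γ := by
  have hP := M.pacc_nonneg w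
  have hR := M.prej_nonneg w
  have ht := pow_pos hδ0 (w.length + 2)
  rw [PostPFA.fa, pad_pacc, pad_prej, fa]
  rcases (add_nonneg hP hR).eq_or_lt with hS | hS
  · obtain ⟨hP0, hR0⟩ : M.pacc w = 0 ∧ M.prej w = 0 := ⟨by linarith, by linarith⟩
    rw [if_neg hS.not_lt, hP0, hR0]
    cases M.tau <;> simp [ht.ne', hγ]
  · rw [if_pos hS, ← mul_div_mul_left (M.pacc w) _ (sub_pos.mpr hδ).ne', mul_add]
    have hS' : 0 < (1 - δ) * M.pacc w + (1 - δ) * M.prej w := by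
      rw [← mul_add]; exact mul_pos (sub_pos.mpr hδ) hS
    calc _ ≤ ((if M.tau = .A then δ ^ (w.length + 2) else 0) +
            if M.tau = .R then δ ^ (w.length + 2) else 0) /
          ((1 - δ) * M.pacc w + (1 - δ) * M.prej w) :=
          abs_add_div_sub_div_le (by nlinarith) (by nlinarith) (by split_ifs <;> positivity)
            (by split_ifs <;> positivity) hS'
      _ ≤ γ := by
        rw [M.tau.ite_add_ite, div_le_iff₀ hS', ← mul_add]
        exact hsmall hS

theorem exists_postPFA_abs_fa_sub_le [Finite α] (M : LPostPFA α) {γ : ℝ} (hγ : 0 < γ) :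
    ∃ M' : PostPFA α, ∀ w, |M'.fa w - M.fa w| ≤ γ := by
  obtain ⟨m, hm0, hm1, hgap⟩ := M.exists_pow_le_pacc_add_prej
  obtain ⟨δ, hδ0, hδ, hsmall⟩ := exists_pow_le_mul hm0 hm1 hγ
  exact ⟨M.pad δ hδ0 (by linarith), fun w => abs_fa_pad_sub_fa_le hγ.le (by linarith)
    fun hS => hsmall _ (by omega) _ (hgap w hS)⟩

end LPostPFA

namespace PostPFA

variable {α : Type} {M : PostPFA α} {L : Set (List α)} {ε : ℝ}

lemma recognizes_of_abs_fa_sub_le {M₀ : LPostPFA α} {γ : ℝ} (h₀ : M₀.Recognizes L ε)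
    (h : ∀ w, |M.fa w - M₀.fa w| ≤ γ) : M.Recognizes L (ε + γ) := fun w => by
  obtain ⟨h₁, h₂⟩ := abs_le.mp (h w)
  exact ⟨fun hw => by linarith [(h₀ w).1 hw], fun hw => by linarith [(h₀ w).2 hw]⟩

variable (M) in
def toLPostPFA : LPostPFA α :=
  { M with tau := .A }

lemma fa_toLPostPFA (w : List α) : M.toLPostPFA.fa w = M.fa w :=
  if_pos (M.postPos w)

lemma Recognizes.toLPostPFA (h : M.Recognizes L ε) : M.toLPostPFA.Recognizes L ε := fun w => by
  simpa only [fa_toLPostPFA] using h w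

end PostPFA

/-- `LPostS = PostS`: a language is recognized with some error bound `ε < 1/2` by a
Latvian RT-PostPFA iff it is recognized with some error bound `ε < 1/2` by an RT-PostPFA. -/
theorem LPostS_eq_PostS {α : Type} [Fintype α] (L : Set (List α)) :
    LPostS L ↔ PostS L := by
  constructor
  · rintro ⟨M, ε, hε0, hε, hM⟩
    obtain ⟨M', hM'⟩ := M.exists_postPFA_abs_fa_sub_le (γ := (1 / 2 - ε) / 2) (by linarith)
    exact ⟨M', ε + (1 / 2 - ε) / 2, by linarith, by linarith,
      PostPFA.recognizes_of_abs_fa_sub_le hM hM'⟩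
  · rintro ⟨M, ε, hε0, hε, hM⟩
    exact ⟨M.toLPostPFA, ε, hε0, hε, hM.toLPostPFA⟩
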